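/- arXiv:2302.09930 — 2 statements merged into one kernel-verified Lean document; each statement's English description precedes it below -/
import Mathlib

section
/- (Hoeffding's inequality for U-statistics, order m = 2.) Let X₁,…,X_n be i.i.d. with distribution P, and h : X × X → ℝ a symmetric measurable function with a ≤ h ≤ b. Let θ = E[h(X₁,X₂)] and U_n = (1/C(n,2)) ∑_{i<j} h(X_i, X_j). Then for any u > 0 and n ≥ 2, P(U_n − θ ≥ u) ≤ exp(−2⌊n/2⌋u²/(b−a)²), and in particular P(|U_n − θ| ≥ u) ≤ 2 exp(−2⌊n/2⌋u²/(b−a)²). -/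
open MeasureTheory ProbabilityTheory
open scoped BigOperators

open Real Finset Equiv
open scoped NNReal Nat

/-!
Hoeffding's decomposition. Let `k = ⌊n/2⌋`. For a permutation `σ` of `{0, …, n-1}`, the average
`W_σ` of `h` over the `k` disjoint pairs `(σ(2i), σ(2i+1))` is a mean of `k` independent variables
with values in `[a, b]` and mean `θ`, so by Hoeffding's lemma `W_σ - θ` is sub-Gaussian with
variance proxy `(b-a)²/(4k)`. Averaging `W_σ` over all permutations gives `U_n`. By convexity of
`exp`, an average of variables with a common sub-Gaussian bound has the same bound, even though the
`W_σ` are far from independent. The Chernoff bound then gives the one-sided tail, and applying it to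
`θ - U_n` as well gives the two-sided tail.
-/

namespace ProbabilityTheory

variable {Ω : Type*} [MeasurableSpace Ω] {μ : Measure Ω}

lemma HasSubgaussianMGF.sum_mul_of_sum_eq_one {ι : Type*} {s : Finset ι} {w : ι → ℝ}
    (hw₀ : ∀ i ∈ s, 0 ≤ w i) (hw₁ : ∑ i ∈ s, w i = 1) {Y : ι → Ω → ℝ} {c : ℝ≥0}
    (hY : ∀ i ∈ s, HasSubgaussianMGF (Y i) c μ) :
    HasSubgaussianMGF (fun ω ↦ ∑ i ∈ s, w i * Y i ω) c μ := by
  have hjensen (t : ℝ) (ω : Ω) :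
      exp (t * ∑ i ∈ s, w i * Y i ω) ≤ ∑ i ∈ s, w i * exp (t * Y i ω) := by
    have := convexOn_exp.map_sum_le hw₀ hw₁ (p := fun i ↦ t * Y i ω) (by simp)
    simpa only [smul_eq_mul, mul_sum, mul_left_comm t] using this
  have hint (t : ℝ) : Integrable (fun ω ↦ ∑ i ∈ s, w i * exp (t * Y i ω)) μ :=
    integrable_finsetSum _ fun i hi ↦ ((hY i hi).integrable_exp_mul t).const_mul _
  refine ⟨fun t ↦ (hint t).mono' ?_ (ae_of_all _ fun ω ↦ ?_), fun t ↦ ?_⟩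
  · refine continuous_exp.comp_aestronglyMeasurable (AEStronglyMeasurable.const_mul ?_ t)
    exact Finset.aestronglyMeasurable_fun_sum _ fun i hi ↦
      ((hY i hi).aestronglyMeasurable.const_mul _)
  · rw [norm_of_nonneg (exp_pos _).le]
    exact hjensen t ω
  · calc mgf (fun ω ↦ ∑ i ∈ s, w i * Y i ω) μ t
        ≤ ∫ ω, ∑ i ∈ s, w i * exp (t * Y i ω) ∂μ :=
          integral_mono_of_nonneg (ae_of_all _ fun _ ↦ (exp_pos _).le) (hint t)
            (ae_of_all _ (hjensen t))
      _ = ∑ i ∈ s, w i * mgf (Y i) μ t := by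
          rw [integral_finsetSum _ fun i hi ↦ ((hY i hi).integrable_exp_mul t).const_mul _]
          simp only [integral_const_mul, mgf]
      _ ≤ ∑ i ∈ s, w i * exp (c * t ^ 2 / 2) :=
          sum_le_sum fun i hi ↦ mul_le_mul_of_nonneg_left ((hY i hi).mgf_le t) (hw₀ i hi)
      _ = exp (c * t ^ 2 / 2) := by rw [← sum_mul, hw₁, one_mul]

lemma HasSubgaussianMGF.measure_ge_le_ofReal [IsFiniteMeasure μ] {X : Ω → ℝ} {c : ℝ≥0}
    (h : HasSubgaussianMGF X c μ) {ε : ℝ} (hε : 0 ≤ ε) :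
    μ {ω | ε ≤ X ω} ≤ ENNReal.ofReal (exp (-ε ^ 2 / (2 * c))) := by
  rw [← ENNReal.ofReal_toReal (measure_ne_top μ _)]
  exact ENNReal.ofReal_le_ofReal (h.measure_ge_le hε)

lemma HasSubgaussianMGF.measure_abs_ge_le [IsFiniteMeasure μ] {X : Ω → ℝ} {c : ℝ≥0}
    (h : HasSubgaussianMGF X c μ) {ε : ℝ} (hε : 0 ≤ ε) :
    μ {ω | ε ≤ |X ω|} ≤ 2 * ENNReal.ofReal (exp (-ε ^ 2 / (2 * c))) := by
  have hunion : {ω | ε ≤ |X ω|} = {ω | ε ≤ X ω} ∪ {ω | ε ≤ (-X) ω} :=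
    Set.ext fun ω ↦ show ε ≤ |X ω| ↔ ε ≤ X ω ∨ ε ≤ -X ω from le_abs
  calc μ {ω | ε ≤ |X ω|} ≤ μ {ω | ε ≤ X ω} + μ {ω | ε ≤ (-X) ω} :=
        hunion ▸ measure_union_le _ _
    _ ≤ _ := by
        rw [two_mul]
        exact add_le_add (h.measure_ge_le_ofReal hε) (h.neg.measure_ge_le_ofReal hε)

lemma HasSubgaussianMGF.inv_mul_sum_of_iIndepFun {ι : Type*} [Fintype ι] {Y : ι → Ω → ℝ}
    (hindep : iIndepFun Y μ) {c : ℝ≥0} (hY : ∀ i, HasSubgaussianMGF (Y i) c μ) :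
    HasSubgaussianMGF (fun ω ↦ (Fintype.card ι : ℝ)⁻¹ * ∑ i, Y i ω) (c / Fintype.card ι) μ := by
  have := (HasSubgaussianMGF.sum_of_iIndepFun hindep (s := univ) fun i _ ↦ hY i).const_mul
    (Fintype.card ι : ℝ)⁻¹
  convert this using 1
  rw [sum_const, card_univ, nsmul_eq_mul]
  refine NNReal.eq (show (c : ℝ) / Fintype.card ι =
    (Fintype.card ι : ℝ)⁻¹ ^ 2 * (((Fintype.card ι : ℝ≥0) : ℝ) * c) from ?_)
  push_cast
  rcases eq_or_ne (Fintype.card ι : ℝ) 0 with h0 | h0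
  · simp [h0]
  · field_simp

lemma iIndepFun.curry {ι κ E : Type*} [MeasurableSpace E] {X : ι × κ → Ω → E}
    (hX : ∀ p, Measurable (X p)) (h : iIndepFun X μ) :
    iIndepFun (fun i ω j ↦ X (i, j) ω) μ := by
  have := h.isProbabilityMeasure
  have _ p := Measure.isProbabilityMeasure_map (μ := μ) (hX p).aemeasurable
  have hrow i : μ.map (fun ω j ↦ X (i, j) ω) = Measure.infinitePi fun j ↦ μ.map (X (i, j)) :=
    (h.precomp (Prod.mk_right_injective i)).map_fun_eq_infinitePi_map fun j ↦ hX _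
  rw [iIndepFun_iff_map_fun_eq_infinitePi_map fun i ↦ measurable_pi_lambda _ fun j ↦ hX _]
  simp_rw [hrow]
  rw [← Measure.infinitePi_map_curry (fun i j ↦ μ.map (X (i, j))),
    ← h.map_fun_eq_infinitePi_map hX, Measure.map_map (by fun_prop) (measurable_pi_lambda _ hX)]
  rfl

lemma IndepFun.integral_comp_eq_integral_integral {E F : Type*} [MeasurableSpace E]
    [MeasurableSpace F] [IsFiniteMeasure μ] {Y : Ω → E} {Z : Ω → F} (hY : Measurable Y)
    (hZ : Measurable Z) (hind : IndepFun Y Z μ) {f : E → F → ℝ}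
    (hf : Integrable (Function.uncurry f) ((μ.map Y).prod (μ.map Z))) :
    ∫ ω, f (Y ω) (Z ω) ∂μ = ∫ x, ∫ y, f x y ∂(μ.map Z) ∂(μ.map Y) := by
  have hmap := (indepFun_iff_map_prod_eq_prod_map_map hY.aemeasurable hZ.aemeasurable).mp hind
  calc ∫ ω, f (Y ω) (Z ω) ∂μ
      = ∫ p, Function.uncurry f p ∂(μ.map fun ω ↦ (Y ω, Z ω)) :=
        (integral_map (hY.prodMk hZ).aemeasurable (hmap ▸ hf.aestronglyMeasurable)).symm
    _ = _ := by rw [hmap, integral_prod _ hf]; rfl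

end ProbabilityTheory

lemma card_offDiag_mul_sum_perm_apply {α : Type*} [Fintype α] [DecidableEq α] (g : α → α → ℝ)
    {s s' : α} (hss' : s ≠ s') :
    (#(univ : Finset α).offDiag : ℝ) * ∑ σ : Perm α, g (σ s) (σ s') =
      (Fintype.card α)! * ∑ x ∈ (univ : Finset α).offDiag, g x.1 x.2 := by
  have hconst : ∀ x ∈ (univ : Finset α).offDiag,
      ∑ σ : Perm α, g (σ x.1) (σ x.2) = ∑ σ : Perm α, g (σ s) (σ s') := by
    intro x hx
    obtain ⟨τ, hτ, hτ'⟩ := MulAction.is_two_pretransitive_iff.mp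
      (Perm.isMultiplyPretransitive α 2) hss' (mem_offDiag.mp hx).2.2
    rw [← hτ, ← hτ']
    exact Fintype.sum_equiv (Equiv.mulRight τ) _ _ fun σ ↦ rfl
  calc (#(univ : Finset α).offDiag : ℝ) * ∑ σ : Perm α, g (σ s) (σ s')
      = ∑ x ∈ (univ : Finset α).offDiag, ∑ σ : Perm α, g (σ x.1) (σ x.2) := by
        rw [sum_congr rfl hconst, sum_const, nsmul_eq_mul]
    _ = ∑ σ : Perm α, ∑ x ∈ (univ : Finset α).offDiag, g (σ x.1) (σ x.2) := sum_comm
    _ = ∑ _σ : Perm α, ∑ x ∈ (univ : Finset α).offDiag, g x.1 x.2 :=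
        sum_congr rfl fun σ _ ↦ sum_equiv (σ.prodCongr σ) (by simp) fun _ _ ↦ rfl
    _ = _ := by rw [sum_const, card_univ, Fintype.card_perm, nsmul_eq_mul]

lemma sum_range_sum_range_of_symm {M : Type*} [AddCommMonoid M] (g : ℕ → ℕ → M)
    (hg : ∀ i j, g i j = g j i) (n : ℕ) :
    ∑ i ∈ range n, ∑ j ∈ range n, g i j =
      2 • ∑ j ∈ range n, ∑ i ∈ range j, g i j + ∑ i ∈ range n, g i i := by
  induction n with
  | zero => simp
  | succ n ih =>
    simp only [sum_range_succ, sum_add_distrib, ih, smul_add]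
    rw [sum_congr rfl fun j _ ↦ hg n j]
    abel

lemma sum_offDiag_fin_eq_two_mul (g : ℕ → ℕ → ℝ) (hg : ∀ i j, g i j = g j i) (n : ℕ) :
    ∑ x ∈ (univ : Finset (Fin n)).offDiag, g x.1 x.2 =
      2 * ∑ j ∈ range n, ∑ i ∈ range j, g i j := by
  have hsplit := sum_union (disjoint_diag_offDiag (univ : Finset (Fin n)))
    (f := fun x ↦ g x.1 x.2)
  rw [diag_union_offDiag, sum_product, sum_diag] at hsplit
  simp only [Fin.sum_univ_eq_sum_range (g _), Fin.sum_univ_eq_sum_range (fun i ↦ g i i),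
    Fin.sum_univ_eq_sum_range (fun i ↦ ∑ j ∈ range n, g i j),
    sum_range_sum_range_of_symm g hg, nsmul_eq_mul] at hsplit
  push_cast at hsplit
  linarith

def pairSlots {k n : ℕ} (h : 2 * k ≤ n) : Fin k × Fin 2 ↪ Fin n where
  toFun x := ⟨2 * x.1 + x.2, by omega⟩
  inj' x y hxy := by
    simp only [Fin.mk.injEq] at hxy
    ext <;> omega

lemma ustat_sub_eq_sum_perm_pairs (g : ℕ → ℕ → ℝ) (hg : ∀ i j, g i j = g j i) (θ : ℝ)
    {k n : ℕ} (hk : 0 < k) (h2k : 2 * k ≤ n) :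
    (1 / (n.choose 2 : ℝ)) * (∑ j ∈ range n, ∑ i ∈ range j, g i j) - θ =
      ∑ σ : Perm (Fin n), (n ! : ℝ)⁻¹ * ((k : ℝ)⁻¹ *
        ∑ i : Fin k, (g (σ (pairSlots h2k (i, 0))) (σ (pairSlots h2k (i, 1))) - θ)) := by
  set S := ∑ j ∈ range n, ∑ i ∈ range j, g i j
  have hn₀ : (n : ℝ) ≠ 0 := by exact_mod_cast (by omega : n ≠ 0)
  have hn₁ : (n : ℝ) ≠ 1 := by exact_mod_cast (by omega : n ≠ 1)
  have hpair (i : Fin k) :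
      ∑ σ : Perm (Fin n), g (σ (pairSlots h2k (i, 0))) (σ (pairSlots h2k (i, 1))) =
        n ! * (2 * S) / (n * (n - 1)) := by
    have hne : pairSlots h2k (i, 0) ≠ pairSlots h2k (i, 1) :=
      (pairSlots h2k).injective.ne (by simp)
    have := card_offDiag_mul_sum_perm_apply (fun x y : Fin n ↦ g x y) hne
    rw [offDiag_card, card_univ, Fintype.card_fin, Nat.cast_sub (Nat.le_mul_self n),
      sum_offDiag_fin_eq_two_mul g hg, Nat.cast_mul, ← mul_sub_one] at this
    rw [eq_div_iff (mul_ne_zero hn₀ (sub_ne_zero.mpr hn₁)), mul_comm, this]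
  rw [← mul_sum, ← mul_sum, sum_comm]
  simp only [sum_sub_distrib, hpair, sum_const, card_univ, Fintype.card_fin, Fintype.card_perm,
    nsmul_eq_mul, Nat.cast_choose_two]
  field_simp

section UStatistic

variable {Ω E : Type*} [MeasurableSpace Ω] [MeasurableSpace E] {P : Measure Ω}
  [IsProbabilityMeasure P] {X : ℕ → Ω → E} {ν : Measure E} {h : E → E → ℝ} {a b θ : ℝ}

lemma hasSubgaussianMGF_core_sub (hXm : ∀ i, Measurable (X i)) (hindep : iIndepFun X P)
    (hid : ∀ i, P.map (X i) = ν) (hhm : Measurable (Function.uncurry h))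
    (hab : ∀ x y, a ≤ h x y ∧ h x y ≤ b) (hθ : θ = ∫ x, ∫ y, h x y ∂ν ∂ν) {p q : ℕ}
    (hpq : p ≠ q) :
    HasSubgaussianMGF (fun ω ↦ h (X p ω) (X q ω) - θ) ((‖b - a‖₊ / 2) ^ 2) P := by
  have hν : IsProbabilityMeasure ν := by
    rw [← hid 0]; exact Measure.isProbabilityMeasure_map (hXm 0).aemeasurable
  have hint : Integrable (Function.uncurry h) (ν.prod ν) :=
    Integrable.of_mem_Icc a b hhm.aemeasurable (ae_of_all _ fun z ↦ hab z.1 z.2)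
  have hmean : P[fun ω ↦ h (X p ω) (X q ω)] = θ := by
    rw [hθ, IndepFun.integral_comp_eq_integral_integral (hXm p) (hXm q) (hindep.indepFun hpq)
      (by rwa [hid, hid]), hid, hid]
  have hmeas : Measurable fun ω ↦ h (X p ω) (X q ω) := hhm.comp ((hXm p).prodMk (hXm q))
  simpa only [hmean] using
    hasSubgaussianMGF_of_mem_Icc hmeas.aemeasurable (ae_of_all P fun ω ↦ hab _ _)

lemma hasSubgaussianMGF_inv_mul_sum_core_sub (hXm : ∀ i, Measurable (X i))
    (hindep : iIndepFun X P) (hid : ∀ i, P.map (X i) = ν) (hhm : Measurable (Function.uncurry h))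
    (hab : ∀ x y, a ≤ h x y ∧ h x y ≤ b) (hθ : θ = ∫ x, ∫ y, h x y ∂ν ∂ν)
    {ι : Type*} [Fintype ι] {e : ι × Fin 2 → ℕ} (he : Function.Injective e) :
    HasSubgaussianMGF
      (fun ω ↦ (Fintype.card ι : ℝ)⁻¹ * ∑ i, (h (X (e (i, 0)) ω) (X (e (i, 1)) ω) - θ))
      ((‖b - a‖₊ / 2) ^ 2 / Fintype.card ι) P := by
  have hpairs : iIndepFun (fun i ω j ↦ X (e (i, j)) ω) P :=
    (hindep.precomp he).curry fun _ ↦ hXm _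
  refine HasSubgaussianMGF.inv_mul_sum_of_iIndepFun
    (hpairs.comp (fun _ v ↦ h (v 0) (v 1) - θ) fun _ ↦ ?_)
    fun i ↦ hasSubgaussianMGF_core_sub hXm hindep hid hhm hab hθ (he.ne (by simp))
  exact (hhm.comp (((measurable_pi_apply 0).prodMk (measurable_pi_apply 1)) :
    Measurable fun v : Fin 2 → E ↦ (v 0, v 1))).sub_const θ

end UStatistic

/-- Hoeffding's inequality for U-statistics of order 2: for i.i.d. `X₁,…,Xₙ` and a bounded
symmetric core `h` with `a ≤ h ≤ b`, `θ = E[h(X₁,X₂)]` and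
`Uₙ = (1/C(n,2)) ∑_{i<j} h(Xᵢ,Xⱼ)`, one has
`P(Uₙ − θ ≥ u) ≤ exp(−2⌊n/2⌋u²/(b−a)²)` and
`P(|Uₙ − θ| ≥ u) ≤ 2 exp(−2⌊n/2⌋u²/(b−a)²)`. -/
theorem hoeffding_ustat_order_two
    {Ω E : Type*} [MeasurableSpace Ω] [MeasurableSpace E]
    (P : Measure Ω) [IsProbabilityMeasure P]
    (X : ℕ → Ω → E) (hXm : ∀ i, Measurable (X i))
    (hindep : iIndepFun X P)
    (ν : Measure E) (hid : ∀ i, P.map (X i) = ν)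
    (h : E → E → ℝ) (hhm : Measurable (Function.uncurry h))
    (hsymm : ∀ x y, h x y = h y x)
    (a b : ℝ) (hab : ∀ x y, a ≤ h x y ∧ h x y ≤ b)
    (θ : ℝ) (hθ : θ = ∫ x, ∫ y, h x y ∂ν ∂ν)
    (n : ℕ) (hn : 2 ≤ n) (u : ℝ) (hu : 0 < u) :
    P {ω | u ≤ (1 / (n.choose 2 : ℝ)) *
          (∑ j ∈ Finset.range n, ∑ i ∈ Finset.range j, h (X i ω) (X j ω)) - θ}
      ≤ ENNReal.ofReal (Real.exp (-2 * ((n / 2 : ℕ) : ℝ) * u ^ 2 / (b - a) ^ 2)) ∧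
    P {ω | u ≤ |(1 / (n.choose 2 : ℝ)) *
          (∑ j ∈ Finset.range n, ∑ i ∈ Finset.range j, h (X i ω) (X j ω)) - θ|}
      ≤ 2 * ENNReal.ofReal (Real.exp (-2 * ((n / 2 : ℕ) : ℝ) * u ^ 2 / (b - a) ^ 2)) := by
  set k := n / 2
  have hk : 0 < k := by omega
  have h2k : 2 * k ≤ n := Nat.mul_div_le n 2
  have hU : HasSubgaussianMGF (fun ω ↦ (1 / (n.choose 2 : ℝ)) *
      (∑ j ∈ Finset.range n, ∑ i ∈ Finset.range j, h (X i ω) (X j ω)) - θ)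
      ((‖b - a‖₊ / 2) ^ 2 / k) P := by
    have hpairs (σ : Perm (Fin n)) := hasSubgaussianMGF_inv_mul_sum_core_sub hXm hindep hid hhm
      hab hθ (e := fun x ↦ (σ (pairSlots h2k x) : ℕ))
      (Fin.val_injective.comp (σ.injective.comp (pairSlots h2k).injective))
    simp only [Fintype.card_fin] at hpairs
    refine (HasSubgaussianMGF.sum_mul_of_sum_eq_one (s := univ) (w := fun _ ↦ (n ! : ℝ)⁻¹)
      (fun _ _ ↦ by positivity) ?_ fun σ _ ↦ hpairs σ).congr (ae_of_all _ fun ω ↦ ?_)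
    · rw [sum_const, card_univ, Fintype.card_perm, Fintype.card_fin, nsmul_eq_mul]
      field_simp
    · exact (ustat_sub_eq_sum_perm_pairs (fun i j ↦ h (X i ω) (X j ω)) (fun i j ↦ hsymm _ _)
        θ hk h2k).symm
  have hrate : -u ^ 2 / (2 * ((‖b - a‖₊ / 2) ^ 2 / k : ℝ≥0)) = -2 * k * u ^ 2 / (b - a) ^ 2 := by
    push_cast
    rw [Real.norm_eq_abs, div_pow, sq_abs]
    -- for `b = a` both sides are `0`, as `x / 0 = 0`
    rcases eq_or_ne (b - a) 0 with hba | hba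
    · simp [hba]
    · field_simp
  rw [← hrate]
  exact ⟨hU.measure_ge_le_ofReal hu.le, hU.measure_abs_ge_le hu.le⟩
end

section
/- Let X₁ and X₂ be random elements with bounded kernels k₁, k₂ and product kernel k = k₁⊗k₂. If X₁ and X₂ are independent (P = P₁⊗P₂), then μ_k(P) = μ_{k₁}(P₁) ⊗ μ_{k₂}(P₂), i.e., the mean embedding of a product measure under a tensor product kernel is the tensor product of the marginal mean embeddings; hence HSIC_k(P) = 0. -/
open MeasureTheory
open scoped RealInnerProductSpace

/-- Mean embedding of a product measure under a tensor product kernel factorizes: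
if `P = P₁ ⊗ P₂` (independence) then `μ_k(P) = μ_{k₁}(P₁) ⊗ μ_{k₂}(P₂)`, where the Hilbert
tensor map `T` is continuous bilinear and satisfies `⟪T a₁ a₂, T b₁ b₂⟫ = ⟪a₁,b₁⟫⟪a₂,b₂⟫`;
hence `HSIC_k(P) = 0`. -/
theorem mean_embedding_prod_factorizes
    {X₁ X₂ : Type*} [MeasurableSpace X₁] [MeasurableSpace X₂]
    (P₁ : Measure X₁) (P₂ : Measure X₂)
    [IsProbabilityMeasure P₁] [IsProbabilityMeasure P₂]
    {H₁ H₂ G : Type*}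
    [NormedAddCommGroup H₁] [InnerProductSpace ℝ H₁] [CompleteSpace H₁]
    [NormedAddCommGroup H₂] [InnerProductSpace ℝ H₂] [CompleteSpace H₂]
    [NormedAddCommGroup G] [InnerProductSpace ℝ G] [CompleteSpace G]
    (T : H₁ →L[ℝ] H₂ →L[ℝ] G)
    (hT : ∀ (a₁ b₁ : H₁) (a₂ b₂ : H₂), ⟪T a₁ a₂, T b₁ b₂⟫ = ⟪a₁, b₁⟫ * ⟪a₂, b₂⟫)
    (φ₁ : X₁ → H₁) (φ₂ : X₂ → H₂)
    (h₁ : Integrable φ₁ P₁) (h₂ : Integrable φ₂ P₂)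
    (hjoint : Integrable (fun x : X₁ × X₂ => T (φ₁ x.1) (φ₂ x.2)) (P₁.prod P₂)) :
    (∫ x : X₁ × X₂, T (φ₁ x.1) (φ₂ x.2) ∂(P₁.prod P₂))
        = T (∫ x, φ₁ x ∂P₁) (∫ y, φ₂ y ∂P₂) ∧
    ‖(∫ x : X₁ × X₂, T (φ₁ x.1) (φ₂ x.2) ∂(P₁.prod P₂))
        - T (∫ x, φ₁ x ∂P₁) (∫ y, φ₂ y ∂P₂)‖ = 0 := by
  have key : (∫ x : X₁ × X₂, T (φ₁ x.1) (φ₂ x.2) ∂(P₁.prod P₂))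
      = T (∫ x, φ₁ x ∂P₁) (∫ y, φ₂ y ∂P₂) := by
    rw [MeasureTheory.integral_prod _ hjoint]
    have hinner : ∀ x : X₁, (∫ y, T (φ₁ x) (φ₂ y) ∂P₂) = T (φ₁ x) (∫ y, φ₂ y ∂P₂) := by
      intro x
      exact (ContinuousLinearMap.integral_comp_comm (T (φ₁ x)) h₂)
    simp_rw [hinner]
    have : (fun x => T (φ₁ x) (∫ y, φ₂ y ∂P₂))
        = fun x => (T.flip (∫ y, φ₂ y ∂P₂)) (φ₁ x) := rfl
    rw [this, ContinuousLinearMap.integral_comp_comm _ h₁]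
    rfl
  exact ⟨key, by rw [key, sub_self, norm_zero]⟩
end
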